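/- Let v ∈ ℕ with v ≥ 1 and b ∈ ℕ with b < 2^v. Suppose the binary digits of Φ(b̄_{v,∞}) are eventually periodic with preperiod u ∈ ℕ and period p ∈ ℕ, p ≥ 1, i.e., R_{u+p}(Φ(b̄_{v,∞})) = R_u(Φ(b̄_{v,∞})). Let t ∈ ℕ be such that tv ≥ u. Then for every positive integer H, R_{tv}(Φ(b̄_{v,t})) ≡ R_{(t+p·2^H)v}(Φ(b̄_{v,t+p·2^H})) (mod 2^{H+2}). -/

import Mathlib

/-!
For `n < 2 ^ k` with `α` ones among its digits, Bernstein's series splits as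
`Φ(n + 2^k y) = Φ(n) + 2^k 3^{-α} Φ(y)`. Since `b̄_{v,∞} = b̄_{v,s} + 2^{vs} b̄_{v,∞}`, this gives
`R_{sv}(Φ(b̄_{v,s})) = R_{sv}(Φ(b̄_{v,∞})) - 3^{-s α(b)} Φ(b̄_{v,∞})`.
For `s = t` and `s = t + p 2^H` the first terms agree by the periodicity of the digits of
`Φ(b̄_{v,∞})` (as `tv ≥ u`), so the difference is `3^{-t α(b)} Φ(b̄_{v,∞}) (3^{-p 2^H α(b)} - 1)`,
which is divisible by `2^{H+2}` because `3^{2^H} ≡ 1 (mod 2^{H+2})`.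
-/

noncomputable section

/-- The inverse of `3` in the ring of 2-adic integers. -/
def inv3 : ℤ_[2] := Ring.inverse 3

/-- The `j`-th binary digit of a 2-adic integer (as `0` or `1`). -/
def dig (x : ℤ_[2]) (j : ℕ) : ℕ := if Nat.testBit (x.appr (j + 1)) j then 1 else 0

/-- The number of one digits of `x` in positions `< j`. -/
def digCount (x : ℤ_[2]) (j : ℕ) : ℕ := ∑ i ∈ Finset.range j, dig x i

/-- Bernstein's formula for the 3x+1 conjugacy map `Φ`:
if `x = ∑_i 2^{d_i}` with `d_0 < d_1 < ⋯`, then `Φ x = -∑_i 2^{d_i} 3^{-i}`. -/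
def Phi (x : ℤ_[2]) : ℤ_[2] :=
  -∑' j : ℕ, (dig x j : ℤ_[2]) * 2 ^ j * inv3 ^ digCount x j

/-- `L_k(x)`: the unique natural number `< 2^k` congruent to `x` mod `2^k`. -/
def Lk (k : ℕ) (x : ℤ_[2]) : ℕ := x.appr k

theorem two_pow_dvd_sub_appr (k : ℕ) (x : ℤ_[2]) :
    (2 : ℤ_[2]) ^ k ∣ x - (x.appr k : ℤ_[2]) := by
  have h := PadicInt.appr_spec k x
  rw [Ideal.mem_span_singleton] at h
  exact_mod_cast h

theorem exists_Rk (k : ℕ) (x : ℤ_[2]) :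
    ∃ z : ℤ_[2], x = (x.appr k : ℤ_[2]) + 2 ^ k * z := by
  obtain ⟨c, hc⟩ := two_pow_dvd_sub_appr k x
  exact ⟨c, by rw [← hc]; ring⟩

/-- `R_k(x)`: the unique 2-adic integer with `x = L_k(x) + 2^k · R_k(x)`. -/
def Rk (k : ℕ) (x : ℤ_[2]) : ℤ_[2] := (exists_Rk k x).choose

/-- `α(a)`: the number of ones in the binary expansion of `a`. -/
def alphaNat (a : ℕ) : ℕ := (Nat.bits a).count true

/-- `b̄_{v,∞} = b · ∑_{i=0}^∞ 2^{v i}` as a 2-adic integer. -/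
def bbar (b v : ℕ) : ℤ_[2] := (b : ℤ_[2]) * ∑' i : ℕ, (2 : ℤ_[2]) ^ (v * i)

/-- `b̄_{v,t} = b · ∑_{i=0}^{t-1} 2^{v i}` as a natural number. -/
def bbarFin (b v t : ℕ) : ℕ := b * ∑ i ∈ Finset.range t, 2 ^ (v * i)

/-- The farPoint `fP(x,k)`: the least `r` such that no 2-adic congruent to `x`
mod `2^k` is a fixed point of `Φ` mod `2^{k+r}`, and `∞` if no such `r` exists. -/
def fP (x k : ℕ) : ℕ∞ :=
  sInf ((↑) '' {r : ℕ | ∀ z : ℤ_[2],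
    (2 : ℤ_[2]) ^ k ∣ z - (x : ℤ_[2]) → ¬ (2 : ℤ_[2]) ^ (k + r) ∣ Phi z - z})

end

theorem Nat.add_pow_mul_lt_pow_add {b n m k s : ℕ} (hn : n < b ^ k) (hm : m < b ^ s) :
    n + b ^ k * m < b ^ (k + s) :=
  calc n + b ^ k * m < b ^ k * (m + 1) := by rw [mul_add_one]; omega
    _ ≤ b ^ k * b ^ s := Nat.mul_le_mul_left _ hm
    _ = b ^ (k + s) := (pow_add b k s).symm

namespace PadicInt

variable {p : ℕ} [Fact p.Prime]

theorem pow_dvd_sub_iff_toZModPow_eq {k : ℕ} {x y : ℤ_[p]} :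
    (p : ℤ_[p]) ^ k ∣ x - y ↔ toZModPow k x = toZModPow k y := by
  rw [← sub_eq_zero, ← map_sub, ← RingHom.mem_ker, ker_toZModPow, Ideal.mem_span_singleton]

theorem appr_eq_val_toZModPow (x : ℤ_[p]) (k : ℕ) : x.appr k = (toZModPow k x).val :=
  (ZMod.val_natCast_of_lt (x.appr_lt k)).symm

theorem appr_eq_appr_of_pow_dvd_sub {k : ℕ} {x y : ℤ_[p]} (h : (p : ℤ_[p]) ^ k ∣ x - y) :
    x.appr k = y.appr k := by
  rw [appr_eq_val_toZModPow, appr_eq_val_toZModPow, pow_dvd_sub_iff_toZModPow_eq.mp h]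

theorem appr_natCast (n k : ℕ) : (n : ℤ_[p]).appr k = n % p ^ k := by
  rw [appr_eq_val_toZModPow, map_natCast, ZMod.val_natCast]

theorem appr_natCast_add_pow_mul {n k : ℕ} (hn : n < p ^ k) (y : ℤ_[p]) (s : ℕ) :
    ((n : ℤ_[p]) + (p : ℤ_[p]) ^ k * y).appr (k + s) = n + p ^ k * y.appr s := by
  have hcongr : (p : ℤ_[p]) ^ (k + s) ∣
      ((n : ℤ_[p]) + p ^ k * y) - ((n + p ^ k * y.appr s : ℕ) : ℤ_[p]) := by
    obtain ⟨c, hc⟩ := Ideal.mem_span_singleton.mp (y.appr_spec s)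
    exact ⟨c, by push_cast; linear_combination (p : ℤ_[p]) ^ k * hc⟩
  rw [appr_eq_appr_of_pow_dvd_sub hcongr, appr_natCast,
    Nat.mod_eq_of_lt (Nat.add_pow_mul_lt_pow_add hn (y.appr_lt s))]

theorem summable_of_pow_dvd {f : ℕ → ℤ_[p]} (h : ∀ j, (p : ℤ_[p]) ^ j ∣ f j) :
    Summable f := by
  have hp : 1 < (p : ℝ) := mod_cast (Fact.out : p.Prime).one_lt
  refine Summable.of_norm_bounded (summable_geometric_of_lt_one (by positivity)
    (inv_lt_one_of_one_lt₀ hp)) fun j => ?_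
  obtain ⟨c, hc⟩ := h j
  calc ‖f j‖ = ‖(p : ℤ_[p]) ^ j‖ * ‖c‖ := by rw [hc, norm_mul]
    _ ≤ ‖(p : ℤ_[p]) ^ j‖ := mul_le_of_le_one_right (norm_nonneg _) c.norm_le_one
    _ = (p : ℝ)⁻¹ ^ j := by rw [norm_p_pow, zpow_neg, zpow_natCast, inv_pow]

end PadicInt

theorem dig_eq_testBit_appr (x : ℤ_[2]) {j N : ℕ} (hj : j < N) :
    dig x j = if (x.appr N).testBit j then 1 else 0 := by
  have h : x.appr (j + 1) = x.appr N % 2 ^ (j + 1) := by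
    rw [← PadicInt.appr_natCast]
    apply PadicInt.appr_eq_appr_of_pow_dvd_sub
    exact_mod_cast (pow_dvd_pow 2 hj).trans (two_pow_dvd_sub_appr N x)
  simp [dig, h, Nat.testBit_mod_two_pow]

theorem dig_natCast (n j : ℕ) : dig (n : ℤ_[2]) j = if n.testBit j then 1 else 0 := by
  simp [dig, PadicInt.appr_natCast, Nat.testBit_mod_two_pow]

theorem dig_natCast_add_two_pow_mul {n k : ℕ} (hn : n < 2 ^ k) (y : ℤ_[2]) (j : ℕ) :
    dig ((n : ℤ_[2]) + 2 ^ k * y) j = if j < k then dig (n : ℤ_[2]) j else dig y (j - k) := by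
  have happr := PadicInt.appr_natCast_add_pow_mul (p := 2) hn y (j + 1)
  push_cast at happr
  rw [dig_eq_testBit_appr _ (show j < k + (j + 1) by omega), happr, add_comm,
    Nat.testBit_two_pow_mul_add _ hn]
  by_cases hjk : j < k
  · simp only [hjk, if_true, dig_natCast]
  · simp only [hjk, if_false, dig_eq_testBit_appr y (show j - k < j + 1 by omega)]

theorem digCount_natCast_add_two_pow_mul_of_le {n k j : ℕ} (hn : n < 2 ^ k) (y : ℤ_[2])
    (hj : j ≤ k) : digCount ((n : ℤ_[2]) + 2 ^ k * y) j = digCount (n : ℤ_[2]) j :=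
  Finset.sum_congr rfl fun i hi => by
    rw [dig_natCast_add_two_pow_mul hn, if_pos ((Finset.mem_range.mp hi).trans_le hj)]

theorem digCount_natCast_add_two_pow_mul_add {n k : ℕ} (hn : n < 2 ^ k) (y : ℤ_[2]) (j : ℕ) :
    digCount ((n : ℤ_[2]) + 2 ^ k * y) (k + j) = digCount (n : ℤ_[2]) k + digCount y j := by
  rw [digCount, Finset.sum_range_add, ← digCount,
    digCount_natCast_add_two_pow_mul_of_le hn y le_rfl]
  congr 1
  refine Finset.sum_congr rfl fun i _ => ?_
  rw [dig_natCast_add_two_pow_mul hn, if_neg (by omega), Nat.add_sub_cancel_left]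

noncomputable def phiTerm (x : ℤ_[2]) (j : ℕ) : ℤ_[2] :=
  (dig x j : ℤ_[2]) * 2 ^ j * inv3 ^ digCount x j

theorem Phi_eq_neg_tsum_phiTerm (x : ℤ_[2]) : Phi x = -∑' j, phiTerm x j := rfl

theorem summable_phiTerm (x : ℤ_[2]) : Summable (phiTerm x) :=
  PadicInt.summable_of_pow_dvd fun j =>
    ⟨dig x j * inv3 ^ digCount x j, by rw [phiTerm]; push_cast; ring⟩

theorem Phi_natCast_of_lt {n k : ℕ} (hn : n < 2 ^ k) :
    Phi (n : ℤ_[2]) = -∑ j ∈ Finset.range k, phiTerm (n : ℤ_[2]) j := by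
  rw [Phi_eq_neg_tsum_phiTerm, tsum_eq_sum]
  intro j hj
  have hbit : n.testBit j = false :=
    Nat.testBit_lt_two_pow (hn.trans_le (Nat.pow_le_pow_right two_pos (by simpa using hj)))
  simp [phiTerm, dig_natCast, hbit]

theorem Phi_natCast_add_two_pow_mul {n k : ℕ} (hn : n < 2 ^ k) (y : ℤ_[2]) :
    Phi ((n : ℤ_[2]) + 2 ^ k * y) =
      Phi (n : ℤ_[2]) + 2 ^ k * inv3 ^ digCount (n : ℤ_[2]) k * Phi y := by
  set x := (n : ℤ_[2]) + 2 ^ k * y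
  have hlow : ∀ j ∈ Finset.range k, phiTerm x j = phiTerm (n : ℤ_[2]) j := fun j hj => by
    have hj : j < k := Finset.mem_range.mp hj
    rw [phiTerm, phiTerm, dig_natCast_add_two_pow_mul hn, if_pos hj,
      digCount_natCast_add_two_pow_mul_of_le hn y hj.le]
  have hhigh : ∀ j, phiTerm x (j + k) = 2 ^ k * inv3 ^ digCount (n : ℤ_[2]) k * phiTerm y j :=
    fun j => by
      rw [phiTerm, phiTerm, dig_natCast_add_two_pow_mul hn, if_neg (by omega),
        Nat.add_sub_cancel, add_comm j k, digCount_natCast_add_two_pow_mul_add hn]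
      ring
  rw [Phi_eq_neg_tsum_phiTerm x, ← (summable_phiTerm x).sum_add_tsum_nat_add k,
    Finset.sum_congr rfl hlow, tsum_congr hhigh, (summable_phiTerm y).tsum_mul_left,
    Phi_natCast_of_lt hn, Phi_eq_neg_tsum_phiTerm y]
  ring

theorem Rk_spec (k : ℕ) (x : ℤ_[2]) : x = (x.appr k : ℤ_[2]) + 2 ^ k * Rk k x :=
  (exists_Rk k x).choose_spec

theorem Rk_eq_of_eq_add {k n : ℕ} {x z : ℤ_[2]} (hn : x.appr k = n)
    (h : x = (n : ℤ_[2]) + 2 ^ k * z) : Rk k x = z := by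
  have hspec := Rk_spec k x
  rw [hn] at hspec
  exact mul_left_cancel₀ (pow_ne_zero k two_ne_zero) (by linear_combination h - hspec)

theorem Rk_add_two_pow_mul (k : ℕ) (x z : ℤ_[2]) : Rk k (x + 2 ^ k * z) = Rk k x + z := by
  refine Rk_eq_of_eq_add (n := x.appr k) ?_ ?_
  · exact PadicInt.appr_eq_appr_of_pow_dvd_sub ⟨z, by push_cast; ring⟩
  · linear_combination Rk_spec k x

theorem Rk_add (k s : ℕ) (x : ℤ_[2]) : Rk (k + s) x = Rk s (Rk k x) := by
  have happr := PadicInt.appr_natCast_add_pow_mul (p := 2) (x.appr_lt k) (Rk k x) s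
  push_cast at happr
  rw [← Rk_spec] at happr
  refine Rk_eq_of_eq_add happr ?_
  push_cast
  linear_combination Rk_spec k x + 2 ^ k * Rk_spec s (Rk k x)

theorem Rk_add_mul_of_Rk_add_eq {u p k : ℕ} {x : ℤ_[2]} (hper : Rk (u + p) x = Rk u x)
    (hk : u ≤ k) (m : ℕ) : Rk (k + m * p) x = Rk k x := by
  have hu : Rk (u + m * p) x = Rk u x := by
    induction m with
    | zero => simp
    | succ m ih => rw [show u + (m + 1) * p = u + p + m * p by ring, Rk_add, hper, ← Rk_add, ih]
  obtain ⟨s, rfl⟩ := Nat.exists_eq_add_of_le hk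
  rw [add_right_comm, Rk_add, hu, ← Rk_add]

section RepeatingDigits

variable {b v : ℕ}

theorem bbar_eq_bbarFin_add (hv : 1 ≤ v) (s : ℕ) :
    bbar b v = (bbarFin b v s : ℤ_[2]) + 2 ^ (v * s) * bbar b v := by
  have hsum : Summable fun i : ℕ => (2 : ℤ_[2]) ^ (v * i) :=
    PadicInt.summable_of_pow_dvd fun i => by
      rw [Nat.cast_ofNat]
      exact pow_dvd_pow 2 (Nat.le_mul_of_pos_left i hv)
  have hshift : ∀ i, (2 : ℤ_[2]) ^ (v * (i + s)) = 2 ^ (v * s) * 2 ^ (v * i) := fun i => by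
    rw [← pow_add, mul_add, add_comm]
  have hsplit := hsum.sum_add_tsum_nat_add s
  rw [tsum_congr hshift, hsum.tsum_mul_left] at hsplit
  rw [bbar, bbarFin]
  push_cast
  linear_combination -(b : ℤ_[2]) * hsplit

theorem bbarFin_succ (s : ℕ) : bbarFin b v (s + 1) = bbarFin b v s + 2 ^ (v * s) * b := by
  rw [bbarFin, bbarFin, Finset.sum_range_succ]
  ring

theorem bbarFin_lt (hb : b < 2 ^ v) (s : ℕ) : bbarFin b v s < 2 ^ (v * s) := by
  induction s with
  | zero => simp [bbarFin]
  | succ s ih =>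
    rw [bbarFin_succ, Nat.mul_succ]
    exact Nat.add_pow_mul_lt_pow_add ih hb

theorem digCount_bbarFin (hb : b < 2 ^ v) (s : ℕ) :
    digCount (bbarFin b v s : ℤ_[2]) (v * s) = s * digCount (b : ℤ_[2]) v := by
  induction s with
  | zero => simp [digCount]
  | succ s ih =>
    rw [bbarFin_succ, Nat.mul_succ]
    push_cast
    rw [digCount_natCast_add_two_pow_mul_add (bbarFin_lt hb s), ih]
    ring

theorem Phi_bbar_eq_Phi_bbarFin_add (hv : 1 ≤ v) (hb : b < 2 ^ v) (s : ℕ) :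
    Phi (bbar b v) = Phi (bbarFin b v s : ℤ_[2])
      + 2 ^ (v * s) * (inv3 ^ (s * digCount (b : ℤ_[2]) v) * Phi (bbar b v)) := by
  conv_lhs => rw [bbar_eq_bbarFin_add hv s]
  rw [Phi_natCast_add_two_pow_mul (bbarFin_lt hb s), digCount_bbarFin hb, mul_assoc]

theorem Rk_Phi_bbarFin (hv : 1 ≤ v) (hb : b < 2 ^ v) (s : ℕ) :
    Rk (s * v) (Phi (bbarFin b v s : ℤ_[2])) =
      Rk (s * v) (Phi (bbar b v)) - inv3 ^ (s * digCount (b : ℤ_[2]) v) * Phi (bbar b v) := by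
  rw [mul_comm s v, eq_sub_iff_add_eq, ← Rk_add_two_pow_mul,
    ← Phi_bbar_eq_Phi_bbarFin_add hv hb s]

end RepeatingDigits

theorem two_pow_add_dvd_pow_two_pow_sub_one {R : Type*} [CommRing R] {a : R} {k : ℕ}
    (hk : 1 ≤ k) (h : 2 ^ k ∣ a - 1) (n : ℕ) : 2 ^ (k + n) ∣ a ^ 2 ^ n - 1 := by
  induction n with
  | zero => simpa using h
  | succ n ih =>
    have htwo : (2 : R) ∣ a ^ 2 ^ n - 1 + 2 :=
      dvd_add ((dvd_pow_self 2 (by omega)).trans ih) dvd_rfl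
    rw [← add_assoc, pow_succ, pow_succ, pow_mul, sq,
      show a ^ 2 ^ n * a ^ 2 ^ n - 1 = (a ^ 2 ^ n - 1) * (a ^ 2 ^ n - 1 + 2) by ring]
    exact mul_dvd_mul ih htwo

theorem inv3_mul_three : inv3 * 3 = 1 :=
  Ring.inverse_mul_cancel 3 (PadicInt.isUnit_iff.mpr (by
    simpa using PadicInt.norm_natCast_eq_one_iff (p := 2) (n := 3) |>.mpr (by norm_num)))

theorem two_pow_dvd_inv3_pow_sub_one {H : ℕ} (hH : 1 ≤ H) (m : ℕ) :
    (2 : ℤ_[2]) ^ (H + 2) ∣ inv3 ^ (2 ^ H * m) - 1 := by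
  -- `inv3 ^ 2 - 1 = -8 * inv3 ^ 2` since `9 * inv3 ^ 2 = 1`
  have hsq : (2 : ℤ_[2]) ^ 3 ∣ inv3 ^ 2 - 1 :=
    ⟨-inv3 ^ 2, by linear_combination (inv3 * 3 + 1) * inv3_mul_three⟩
  obtain ⟨n, rfl⟩ := Nat.exists_eq_add_of_le' hH
  have h := two_pow_add_dvd_pow_two_pow_sub_one (by norm_num) hsq n
  rw [← pow_mul, ← pow_succ'] at h
  rw [show n + 1 + 2 = 3 + n by ring, pow_mul]
  exact h.trans (sub_one_dvd_pow_sub_one _ m)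

theorem stmt13_general (v : ℕ) (hv : 1 ≤ v) (b : ℕ) (hb : b < 2 ^ v)
    (u p : ℕ)
    (hper : Rk (u + p) (Phi (bbar b v)) = Rk u (Phi (bbar b v)))
    (t : ℕ) (ht : u ≤ t * v) (H : ℕ) (hH : 1 ≤ H) :
    (2 : ℤ_[2]) ^ (H + 2) ∣
      Rk (t * v) (Phi ((bbarFin b v t : ℕ) : ℤ_[2])) -
      Rk ((t + p * 2 ^ H) * v) (Phi ((bbarFin b v (t + p * 2 ^ H) : ℕ) : ℤ_[2])) := by
  have hRk : Rk ((t + p * 2 ^ H) * v) (Phi (bbar b v)) = Rk (t * v) (Phi (bbar b v)) := by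
    rw [show (t + p * 2 ^ H) * v = t * v + (2 ^ H * v) * p by ring]
    exact Rk_add_mul_of_Rk_add_eq hper ht _
  rw [Rk_Phi_bbarFin hv hb, Rk_Phi_bbarFin hv hb, hRk]
  convert (two_pow_dvd_inv3_pow_sub_one hH (p * digCount (b : ℤ_[2]) v)).mul_left
    (inv3 ^ (t * digCount (b : ℤ_[2]) v) * Phi (bbar b v)) using 1
  ring

/-- periodicity of `Φ` on strictly repeating 2-adics: if the digits of
`Φ(b̄_{v,∞})` are eventually periodic with preperiod `u` and period `p ≥ 1`, and
`tv ≥ u`, then for every `H ≥ 1`,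
`R_{tv}(Φ(b̄_{v,t})) ≡ R_{(t+p·2^H)v}(Φ(b̄_{v,t+p·2^H})) (mod 2^{H+2})`. -/
theorem stmt13 (v : ℕ) (hv : 1 ≤ v) (b : ℕ) (hb : b < 2 ^ v)
    (u p : ℕ) (hp : 1 ≤ p)
    (hper : Rk (u + p) (Phi (bbar b v)) = Rk u (Phi (bbar b v)))
    (t : ℕ) (ht : u ≤ t * v) (H : ℕ) (hH : 1 ≤ H) :
    (2 : ℤ_[2]) ^ (H + 2) ∣
      Rk (t * v) (Phi ((bbarFin b v t : ℕ) : ℤ_[2])) -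
      Rk ((t + p * 2 ^ H) * v) (Phi ((bbarFin b v (t + p * 2 ^ H) : ℕ) : ℤ_[2])) :=
  stmt13_general v hv b hb u p hper t ht H hH
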